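/- Let T₁, T₂ : ℝ² ⇉ ℝ² be the normal cone mappings T₁(x,y) = N((x,y); Ω₁) with Ω₁ = {(x,y) : y ≥ x²} and T₂(x,y) = N((x,y); Ω₂) with Ω₂ = ℝ × {0}. Then the sum T = T₁ + T₂ satisfies T(0,0) = {0} × ℝ and T(x,y) = ∅ for (x,y) ≠ (0,0), and T is not maximal monotone on ℝ²; indeed, it is not even maximal monotone with respect to any neighborhood of ((0,0),(0,0)). -/

import Mathlib

open Set Filter Topology RealInnerProductSpace

variable {X : Type*} [NormedAddCommGroup X] [InnerProductSpace ℝ X] [CompleteSpace X]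

/-- Graph of a set-valued map. -/
def gph (T : X → Set X) : Set (X × X) := {p | p.2 ∈ T p.1}

/-- Monotone set-valued operator on a Hilbert space. -/
def Mono (T : X → Set X) : Prop :=
  ∀ p ∈ gph T, ∀ q ∈ gph T, 0 ≤ ⟪p.2 - q.2, p.1 - q.1⟫

/-- Maximal monotone operator. -/
def MaxMono (T : X → Set X) : Prop :=
  Mono T ∧ ∀ S : X → Set X, Mono S → gph T ⊆ gph S → gph S = gph T

/-- σ-strongly monotone operator. -/
def StrMono (σ : ℝ) (T : X → Set X) : Prop :=
  ∀ p ∈ gph T, ∀ q ∈ gph T, σ * ‖p.1 - q.1‖ ^ 2 ≤ ⟪p.2 - q.2, p.1 - q.1⟫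

/-- σ-strongly maximal monotone operator. -/
def StrMaxMono (σ : ℝ) (T : X → Set X) : Prop :=
  StrMono σ T ∧ ∀ S : X → Set X, StrMono σ S → gph T ⊆ gph S → gph S = gph T

/-- Monotone with respect to a set `W ⊆ X × X`. -/
def MonoOn' (T : X → Set X) (W : Set (X × X)) : Prop :=
  ∀ p ∈ gph T ∩ W, ∀ q ∈ gph T ∩ W, 0 ≤ ⟪p.2 - q.2, p.1 - q.1⟫

/-- σ-strongly monotone with respect to a set `W ⊆ X × X`. -/
def StrMonoOn' (σ : ℝ) (T : X → Set X) (W : Set (X × X)) : Prop :=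
  ∀ p ∈ gph T ∩ W, ∀ q ∈ gph T ∩ W, σ * ‖p.1 - q.1‖ ^ 2 ≤ ⟪p.2 - q.2, p.1 - q.1⟫

/-- Locally maximal monotone of type (A) with respect to `W`. -/
def LocMaxA (T : X → Set X) (W : Set (X × X)) : Prop :=
  MonoOn' T W ∧ ∀ S : X → Set X, MonoOn' S W → gph T ∩ W ⊆ gph S ∩ W →
    gph S ∩ W = gph T ∩ W

/-- Locally maximal monotone of type (A) around a graph point. -/
def LocMaxAAt (T : X → Set X) (x v : X) : Prop :=
  ∃ U ∈ 𝓝 x, ∃ V ∈ 𝓝 v, LocMaxA T (U ×ˢ V)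

/-- Locally maximal monotone of type (B) around a graph point. -/
def LocMaxBAt (T : X → Set X) (x v : X) : Prop :=
  ∃ U ∈ 𝓝 x, ∃ V ∈ 𝓝 v, ∃ G : X → Set X, MaxMono G ∧
    gph G ∩ U ×ˢ V = gph T ∩ U ×ˢ V

/-- Locally monotone around a graph point. -/
def LocMonoAt (T : X → Set X) (x v : X) : Prop :=
  ∃ U ∈ 𝓝 x, ∃ V ∈ 𝓝 v, ∃ G : X → Set X, Mono G ∧
    gph G ∩ U ×ˢ V = gph T ∩ U ×ˢ V

/-- Locally strongly maximal monotone of type (A) around a graph point with modulus σ. -/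
def LocStrMaxAAt (σ : ℝ) (T : X → Set X) (x v : X) : Prop :=
  ∃ U ∈ 𝓝 x, ∃ V ∈ 𝓝 v, StrMonoOn' σ T (U ×ˢ V) ∧
    ∀ S : X → Set X, MonoOn' S (U ×ˢ V) → gph T ∩ U ×ˢ V ⊆ gph S ∩ U ×ˢ V →
      gph S ∩ U ×ˢ V = gph T ∩ U ×ˢ V

/-- Locally strongly maximal monotone of type (B) around a graph point with modulus σ. -/
def LocStrMaxBAt (σ : ℝ) (T : X → Set X) (x v : X) : Prop :=
  ∃ U ∈ 𝓝 x, ∃ V ∈ 𝓝 v, ∃ G : X → Set X, StrMaxMono σ G ∧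
    gph G ∩ U ×ˢ V = gph T ∩ U ×ˢ V

/-- Pointwise sum of set-valued maps. -/
def addMap (T S : X → Set X) : X → Set X :=
  fun x => {v | ∃ a ∈ T x, ∃ b ∈ S x, v = a + b}

/-- The shift `T + σ I`. -/
def shiftI (σ : ℝ) (T : X → Set X) : X → Set X :=
  fun x => (fun v => v + σ • x) '' T x

/-- Set-valued inverse. -/
def invMap (T : X → Set X) : X → Set X := fun v => {x | v ∈ T x}

/-- Resolvent `(I + λ T)⁻¹` as a set-valued map. -/
def res (lam : ℝ) (T : X → Set X) : X → Set X :=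
  fun y => {x | ∃ v ∈ T x, y = x + lam • v}

/-- `F` has a single-valued localization around `(ȳ, x̄) ∈ gph F`. -/
def HasSVLoc (F : X → Set X) (ybar xbar : X) : Prop :=
  ∃ W ∈ 𝓝 ybar, ∃ Q ∈ 𝓝 xbar, ∃ f : X → X, (∀ y ∈ W, f y ∈ Q) ∧
    ∀ y x, (x ∈ F y ∧ y ∈ W ∧ x ∈ Q) ↔ (y ∈ W ∧ x = f y)

/-- `F` has a continuous single-valued localization around `(ȳ, x̄) ∈ gph F`. -/
def HasCSVLoc (F : X → Set X) (ybar xbar : X) : Prop :=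
  ∃ W ∈ 𝓝 ybar, ∃ Q ∈ 𝓝 xbar, ∃ f : X → X, ContinuousOn f W ∧ (∀ y ∈ W, f y ∈ Q) ∧
    ∀ y x, (x ∈ F y ∧ y ∈ W ∧ x ∈ Q) ↔ (y ∈ W ∧ x = f y)

/-- Hypomonotone with modulus `r` with respect to `W`. -/
def HypoOn (r : ℝ) (T : X → Set X) (W : Set (X × X)) : Prop :=
  ∀ p ∈ gph T ∩ W, ∀ q ∈ gph T ∩ W,
    -(r * ‖p.1 - q.1‖ ^ 2) ≤ ⟪p.2 - q.2, p.1 - q.1⟫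

/-- Locally hypomonotone with modulus `r` around a graph point. -/
def LocHypoAt (r : ℝ) (T : X → Set X) (x v : X) : Prop :=
  ∃ W ∈ 𝓝 ((x, v) : X × X), HypoOn r T W

/-- The regular (Fréchet) normal cone to `Ω ⊆ X × X` at `p`, using the sum norm. -/
def rnc (Ω : Set (X × X)) (p : X × X) : Set (X × X) :=
  {q | ∀ ε > 0, ∀ᶠ u in 𝓝[Ω] p,
    ⟪q.1, u.1 - p.1⟫ + ⟪q.2, u.2 - p.2⟫ ≤ ε * (‖u.1 - p.1‖ + ‖u.2 - p.2‖)}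

/-- The regular coderivative of `F` at `(x, v) ∈ gph F` applied to `w`. -/
def coderiv (F : X → Set X) (x v w : X) : Set X :=
  {z | ((z, -w) : X × X) ∈ rnc (gph F) (x, v)}

/-- The graph of `T` is locally closed around `p`. -/
def LocClosedAt (Ω : Set (X × X)) (p : X × X) : Prop :=
  ∃ ε > 0, IsClosed (Ω ∩ Metric.closedBall p ε)

noncomputable section

/-- The Euclidean plane. -/
abbrev E2 : Type := EuclideanSpace ℝ (Fin 2)

/-- Normal cone (of convex analysis) to `Ω` at `z`; empty when `z ∉ Ω`. -/
def ncone (Ω : Set E2) (z : E2) : Set E2 :=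
  {v | z ∈ Ω ∧ ∀ w ∈ Ω, ⟪v, w - z⟫ ≤ 0}

/-- `Ω₁ = {(x, y) : y ≥ x²}`. -/
def Om1 : Set E2 := {p | (p 0) ^ 2 ≤ p 1}

/-- `Ω₂ = ℝ × {0}`. -/
def Om2 : Set E2 := {p | p 1 = 0}

/-- `T₁ = N(·; Ω₁)`. -/
def Tone : E2 → Set E2 := fun p => ncone Om1 p

/-- `T₂ = N(·; Ω₂)`. -/
def Ttwo : E2 → Set E2 := fun p => ncone Om2 p

/-- Auxiliary element constructor for `E2`. -/
noncomputable def mk2 (a b : ℝ) : E2 := (WithLp.equiv 2 (Fin 2 → ℝ)).symm ![a, b]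

lemma inner_eq' (a b : E2) : ⟪a, b⟫ = a 0 * b 0 + a 1 * b 1 := by
  simp [PiLp.inner_apply, Fin.sum_univ_two, RCLike.inner_apply]
  ring

lemma mk2_0 (a b : ℝ) : mk2 a b 0 = a := by simp [mk2]
lemma mk2_1 (a b : ℝ) : mk2 a b 1 = b := by simp [mk2]

lemma ext2 {p : E2} (h0 : p 0 = 0) (h1 : p 1 = 0) : p = 0 := by
  ext i; fin_cases i <;> simpa

lemma Tone_fst {a : E2} (ha : a ∈ Tone 0) : a 0 = 0 := by
  obtain ⟨-, h⟩ := ha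
  have key : ∀ t : ℝ, a 0 * t + a 1 * t ^ 2 ≤ 0 := by
    intro t
    have := h (mk2 t (t ^ 2)) (by simp [Om1, mk2_0, mk2_1])
    simpa [inner_eq', mk2_0, mk2_1] using this
  set c : ℝ := 1 / (1 + (a 1) ^ 2) with hc
  have hcpos : 0 < c := by positivity
  have h1 : (1 / 2 : ℝ) ≤ 1 + a 1 * c := by
    rw [hc, mul_one_div]
    have hb : -(1/2 : ℝ) ≤ a 1 / (1 + a 1 ^ 2) := by
      rw [neg_le, ← neg_div, div_le_iff₀ (by positivity)]
      nlinarith [sq_nonneg (a 1 + 1)]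
    linarith
  have h2 := key (a 0 * c)
  have h3 : a 0 ^ 2 * c * (1 + a 1 * c) ≤ 0 := by nlinarith [h2]
  have hq : 0 ≤ a 0 ^ 2 * c := mul_nonneg (sq_nonneg _) hcpos.le
  have h4 : a 0 ^ 2 * c * (1 / 2) ≤ a 0 ^ 2 * c * (1 + a 1 * c) :=
    mul_le_mul_of_nonneg_left h1 hq
  have h5 : a 0 ^ 2 * c = 0 := le_antisymm (by linarith) hq
  have h6 : a 0 ^ 2 = 0 := by
    rcases mul_eq_zero.1 h5 with h | h
    · exact h
    · exact absurd h hcpos.ne'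
  exact pow_eq_zero_iff (two_ne_zero) |>.1 h6

lemma Ttwo_fst {p a : E2} (ha : a ∈ Ttwo p) : a 0 = 0 := by
  obtain ⟨hp, h⟩ := ha
  have hp1 : p 1 = 0 := hp
  have h1 := h (mk2 (p 0 + 1) 0) (by simp [Om2, mk2_1])
  have h2 := h (mk2 (p 0 - 1) 0) (by simp [Om2, mk2_1])
  simp [inner_eq', mk2_0, mk2_1, hp1] at h1 h2
  linarith

lemma addMap_mem_zero {p : E2} {v : E2} (hv : v ∈ addMap Tone Ttwo p) : p = 0 := by
  obtain ⟨a, ⟨hp1, -⟩, b, ⟨hp2, -⟩, -⟩ := hv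
  have h1 : (p 0) ^ 2 ≤ p 1 := hp1
  have h2 : p 1 = 0 := hp2
  exact ext2 (by nlinarith) h2

lemma addMap_iff' (v : E2) : v ∈ addMap Tone Ttwo 0 ↔ v 0 = 0 := by
  constructor
  · rintro ⟨a, ha, b, hb, rfl⟩
    have := Tone_fst ha
    have := Ttwo_fst hb
    simp_all [PiLp.add_apply]
  · intro hv
    refine ⟨0, ⟨by simp [Om1], ?_⟩, v, ⟨by simp [Om2], ?_⟩, by simp⟩
    · intro w hw; simp [inner_eq']
    · intro w hw
      have hw1 : w 1 = 0 := hw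
      simp [inner_eq', hv, hw1]

/-- The enlarging operator used to refute maximality. -/
def Sbig : E2 → Set E2 := fun p => {_v | p = 0}

lemma gph_Sbig {q : E2 × E2} : q ∈ gph Sbig ↔ q.1 = 0 := Iff.rfl

lemma Sbig_mono : Mono Sbig := by
  intro p hp q hq
  have hp1 : p.1 = 0 := hp
  have hq1 : q.1 = 0 := hq
  rw [hp1, hq1, sub_self, inner_zero_right]

lemma gph_sub : gph (addMap Tone Ttwo) ⊆ gph Sbig := by
  intro q hq
  exact addMap_mem_zero hq

/-- A point of `gph Sbig` with second-coordinate first entry `t`. -/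
noncomputable def wit (t : ℝ) : E2 × E2 := (0, mk2 t 0)

lemma wit_not_mem {t : ℝ} (ht : t ≠ 0) : wit t ∉ gph (addMap Tone Ttwo) := by
  intro h
  have : mk2 t 0 0 = 0 := (addMap_iff' _).1 h
  rw [mk2_0] at this
  exact ht this

lemma mk2_norm (t : ℝ) : ‖(mk2 t 0 : E2)‖ = |t| := by
  have : mk2 t 0 = t • (EuclideanSpace.single (0 : Fin 2) (1 : ℝ)) := by
    ext i; fin_cases i <;>
      simp [mk2_0, mk2_1, PiLp.smul_apply, EuclideanSpace.single_apply]
  rw [this, norm_smul, EuclideanSpace.norm_single]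
  simp


/-- The sum `T = T₁ + T₂` has `T(0,0) = {0} × ℝ`, is empty elsewhere, is not maximal
monotone, and is not maximal monotone with respect to any neighborhood of `(0, 0)`. -/
theorem stmt_10 :
    (∀ v : E2, v ∈ addMap Tone Ttwo 0 ↔ v 0 = 0) ∧
    (∀ p : E2, p ≠ 0 → addMap Tone Ttwo p = ∅) ∧
    ¬ MaxMono (addMap Tone Ttwo) ∧
    (∀ U ∈ 𝓝 (0 : E2), ∀ V ∈ 𝓝 (0 : E2), ¬ LocMaxA (addMap Tone Ttwo) (U ×ˢ V)) := by
  refine ⟨addMap_iff', ?_, ?_, ?_⟩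
  · intro p hp
    rw [Set.eq_empty_iff_forall_notMem]
    intro v hv
    exact hp (addMap_mem_zero hv)
  · rintro ⟨-, hmax⟩
    have heq := hmax Sbig Sbig_mono gph_sub
    have h1 : wit 1 ∈ gph Sbig := rfl
    rw [heq] at h1
    exact wit_not_mem one_ne_zero h1
  · rintro U hU V hV ⟨-, hmax⟩
    have hSmono : MonoOn' Sbig (U ×ˢ V) := fun p hp q hq =>
      Sbig_mono p hp.1 q hq.1
    have hsub : gph (addMap Tone Ttwo) ∩ U ×ˢ V ⊆ gph Sbig ∩ U ×ˢ V :=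
      fun q hq => ⟨gph_sub hq.1, hq.2⟩
    have heq := hmax Sbig hSmono hsub
    obtain ⟨ε, hε, hball⟩ := Metric.mem_nhds_iff.1 hV
    have hmem : wit (ε / 2) ∈ gph Sbig ∩ U ×ˢ V := by
      refine ⟨rfl, mem_of_mem_nhds hU, hball ?_⟩
      simp only [wit]
      rw [Metric.mem_ball, dist_zero_right, mk2_norm, abs_of_pos (by linarith)]
      linarith
    rw [heq] at hmem
    exact wit_not_mem (by positivity) hmem.1

end
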